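/- Let Λ be a finite species set, let S ⊆ Λ be a set of species with d ∉ S, and consider the CRN with the (2,1) catalytic rules d + s → d for every s ∈ S and the (2,0) void rule d + d → ∅. For any configuration C over Λ ∖ {d}, consider the 2-step step CRN that starts step 1 from C plus one copy of d and adds one further copy of d at step 2. Then the unique terminal configuration after step 2 is C with all copies of every species of S removed and zero copies of d; i.e., the deletion gadget removes exactly the species in S and then eliminates the deleter species. -/

import Mathlib

/-! ### Chemical Reaction Networks (CRNs) and step CRNs -/

/-- A reaction rule: an ordered pair of multisets (reactants, products). -/
structure Rule (Λ : Type) where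
  reactants : Multiset Λ
  products : Multiset Λ
deriving DecidableEq

namespace Rule

/-- A `(2,0)` void rule: exactly two reactants and no products. -/
def IsVoid20 {Λ : Type} (R : Rule Λ) : Prop :=
  Multiset.card R.reactants = 2 ∧ R.products = 0

/-- A `(2,1)` catalytic rule: two reactants, one product which is one of the reactants. -/
def IsCat21 {Λ : Type} (R : Rule Λ) : Prop :=
  Multiset.card R.reactants = 2 ∧ Multiset.card R.products = 1 ∧ R.products ≤ R.reactants

/-- A void rule: the products form a strict submultiset of the reactants. -/
def IsVoid {Λ : Type} (R : Rule Λ) : Prop := R.products < R.reactants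

end Rule

/-- A single rule application: some rule of `Γ` is applicable to `C` and transforms it to `C'`. -/
def RStep {Λ : Type} [DecidableEq Λ] (Γ : Finset (Rule Λ)) (C C' : Multiset Λ) : Prop :=
  ∃ R ∈ Γ, R.reactants ≤ C ∧ C' = C - R.reactants + R.products

/-- Reachability: the reflexive-transitive closure of single rule application. -/
def Reaches {Λ : Type} [DecidableEq Λ] (Γ : Finset (Rule Λ)) : Multiset Λ → Multiset Λ → Prop :=
  Relation.ReflTransGen (RStep Γ)

/-- A configuration is terminal if no rule of `Γ` is applicable to it. -/
def Terminal {Λ : Type} (Γ : Finset (Rule Λ)) (C : Multiset Λ) : Prop :=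
  ∀ R ∈ Γ, ¬ R.reactants ≤ C

/-- The set of terminal configurations reachable from `S` after adding `s` (one step). -/
def stepTerm {Λ : Type} [DecidableEq Λ] (Γ : Finset (Rule Λ)) (S : Set (Multiset Λ)) (s : Multiset Λ) :
    Set (Multiset Λ) :=
  {T | ∃ c ∈ S, Reaches Γ (c + s) T ∧ Terminal Γ T}

/-- `TERM_k`: terminal configurations after running the step CRN with step sequence `ss`. -/
def termAfter {Λ : Type} [DecidableEq Λ] (Γ : Finset (Rule Λ)) (ss : List (Multiset Λ)) : Set (Multiset Λ) :=
  ss.foldl (stepTerm Γ) {0}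

/-- All configurations reachable during any step, starting from terminal sets `S`. -/
def reachDuring {Λ : Type} [DecidableEq Λ] (Γ : Finset (Rule Λ)) :
    Set (Multiset Λ) → List (Multiset Λ) → Set (Multiset Λ)
  | _, [] => ∅
  | S, s :: rest =>
      {C | ∃ c ∈ S, Reaches Γ (c + s) C} ∪ reachDuring Γ (stepTerm Γ S s) rest

/-- All configurations reachable at any step of the step CRN `(Γ, ss)`. -/
def reachAll {Λ : Type} [DecidableEq Λ] (Γ : Finset (Rule Λ)) (ss : List (Multiset Λ)) : Set (Multiset Λ) :=
  reachDuring Γ {0} ss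

/-- Add the input configuration `X` to the first step of the step sequence. -/
def addToHead {Λ : Type} (X : Multiset Λ) : List (Multiset Λ) → List (Multiset Λ)
  | [] => [X]
  | s :: rest => (X + s) :: rest

/-- The rules of the deletion gadget: `(2,1)` catalytic rules `d + s → d` for `s ∈ S` and the
`(2,0)` void rule `d + d → ∅`. -/
def delRules {Λ : Type} [DecidableEq Λ] (S : Finset Λ) (d : Λ) : Finset (Rule Λ) :=
  insert (⟨{d, d}, 0⟩ : Rule Λ) (S.image fun s => (⟨{d, s}, {d}⟩ : Rule Λ))

/-! While a single deleter `d` is present, the void rule `d + d → ∅` cannot fire, and every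
catalytic step `d + s → d` removes one species of `S`; so `X.filter (· ∉ S)` is invariant and a
terminal configuration has no species of `S` left. In the second step the extra `d` makes
`d + d → ∅` the only applicable rule, after which no `d` is left and nothing can happen. -/

section StepCRN

variable {Λ : Type} [DecidableEq Λ] {Γ : Finset (Rule Λ)}

theorem rStep_iff {C C' : Multiset Λ} :
    RStep Γ C C' ↔ ∃ R ∈ Γ, ∃ Z, C = R.reactants + Z ∧ C' = R.products + Z := by
  constructor
  · rintro ⟨R, hR, hle, rfl⟩
    obtain ⟨Z, rfl⟩ := Multiset.le_iff_exists_add.1 hle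
    exact ⟨R, hR, Z, rfl, by rw [add_tsub_cancel_left, add_comm]⟩
  · rintro ⟨R, hR, Z, rfl, rfl⟩
    exact ⟨R, hR, le_add_right le_rfl, by rw [add_tsub_cancel_left, add_comm]⟩

theorem Reaches.eq_of_terminal {C C' : Multiset Λ} (hC : Terminal Γ C) (h : Reaches Γ C C') :
    C' = C := by
  rcases Relation.ReflTransGen.cases_head h with rfl | ⟨_, ⟨R, hR, hle, _⟩, _⟩
  · rfl
  · exact absurd hle (hC R hR)

theorem mem_stepTerm_singleton {c s T : Multiset Λ} :
    T ∈ stepTerm Γ {c} s ↔ Reaches Γ (c + s) T ∧ Terminal Γ T := by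
  simp [stepTerm]

end StepCRN

section DeletionGadget

variable {Λ : Type} [DecidableEq Λ] {S : Finset Λ} {d : Λ}

theorem rStep_delRules_iff {X Y : Multiset Λ} :
    RStep (delRules S d) X Y ↔
      X = {d, d} + Y ∨ ∃ s ∈ S, ∃ Z, X = {d, s} + Z ∧ Y = d ::ₘ Z := by
  simp only [rStep_iff, delRules, Finset.mem_insert, Finset.mem_image]
  constructor
  · rintro ⟨R, rfl | ⟨s, hs, rfl⟩, Z, rfl, rfl⟩
    · exact Or.inl (by rw [zero_add])
    · exact Or.inr ⟨s, hs, Z, rfl, rfl⟩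
  · rintro (rfl | ⟨s, hs, Z, rfl, rfl⟩)
    · exact ⟨_, Or.inl rfl, Y, rfl, (zero_add Y).symm⟩
    · exact ⟨_, Or.inr ⟨s, hs, rfl⟩, Z, rfl, rfl⟩

theorem terminal_delRules_iff (hd : d ∉ S) {X : Multiset Λ} :
    Terminal (delRules S d) X ↔ X.count d ≤ 1 ∧ (d ∈ X → ∀ s ∈ S, s ∉ X) := by
  have hpair : ∀ s ∈ S, ({d, s} : Multiset Λ) ≤ X ↔ d ∈ X ∧ s ∈ X := fun s hs => by
    rw [Multiset.le_iff_subset (by simpa using fun h : d = s => hd (h ▸ hs))]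
    simp [Multiset.subset_iff]
  have hdd : ({d, d} : Multiset Λ) ≤ X ↔ 2 ≤ X.count d := by
    rw [Multiset.le_count_iff_replicate_le]
    rfl
  simp only [Terminal, delRules, Finset.mem_insert, Finset.mem_image]
  constructor
  · intro h
    refine ⟨not_lt.1 fun h2 => h _ (Or.inl rfl) (hdd.2 h2), fun hdX s hs hsX => ?_⟩
    exact h _ (Or.inr ⟨s, hs, rfl⟩) ((hpair s hs).2 ⟨hdX, hsX⟩)
  · rintro ⟨h1, h2⟩ R (rfl | ⟨s, hs, rfl⟩) hle
    · exact absurd (hdd.1 hle) (by omega)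
    · obtain ⟨hdX, hsX⟩ := (hpair s hs).1 hle
      exact h2 hdX s hs hsX

theorem count_filter_not_mem_eq (hd : d ∉ S) (X : Multiset Λ) :
    (X.filter (· ∉ S)).count d = X.count d :=
  Multiset.count_filter_of_pos hd

theorem filter_eq_of_rStep_delRules (hd : d ∉ S) {X Y : Multiset Λ} (hX : X.count d ≤ 1)
    (h : RStep (delRules S d) X Y) : Y.filter (· ∉ S) = X.filter (· ∉ S) := by
  rcases rStep_delRules_iff.1 h with rfl | ⟨s, hs, Z, rfl, rfl⟩
  · simp at hX
  · simp [hs, hd]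

theorem filter_eq_of_reaches_delRules (hd : d ∉ S) {X Y : Multiset Λ} (hX : X.count d ≤ 1)
    (h : Reaches (delRules S d) X Y) : Y.filter (· ∉ S) = X.filter (· ∉ S) := by
  induction h with
  | refl => rfl
  | tail _ hstep ih =>
    rw [← ih]
    refine filter_eq_of_rStep_delRules hd ?_ hstep
    rwa [← count_filter_not_mem_eq hd, ih, count_filter_not_mem_eq hd]

theorem reaches_delRules_add_of_forall_mem {Y G : Multiset Λ} (hY : d ∈ Y)
    (hG : ∀ x ∈ G, x ∈ S) : Reaches (delRules S d) (Y + G) Y := by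
  induction G using Multiset.induction_on with
  | empty => rw [add_zero]; exact Relation.ReflTransGen.refl
  | cons s G ih =>
    have hs : s ∈ S := hG s (Multiset.mem_cons_self s G)
    refine Relation.ReflTransGen.head ?_ (ih fun x hx => hG x (Multiset.mem_cons_of_mem hx))
    refine rStep_delRules_iff.2 (Or.inr ⟨s, hs, Y.erase d + G, ?_, ?_⟩)
    · rw [← Multiset.cons_erase hY]
      simp [Multiset.add_cons, Multiset.cons_swap s d]
    · rw [← Multiset.cons_add, Multiset.cons_erase hY]

theorem reaches_delRules_filter (hd : d ∉ S) {X : Multiset Λ} (hX : d ∈ X) :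
    Reaches (delRules S d) X (X.filter (· ∉ S)) := by
  have hdF : d ∈ X.filter (· ∉ S) := Multiset.mem_filter.2 ⟨hX, hd⟩
  have h := reaches_delRules_add_of_forall_mem (S := S) hdF (G := X.filter fun x => ¬x ∉ S)
    fun x hx => not_not.1 (Multiset.mem_filter.1 hx).2
  rwa [Multiset.filter_add_not] at h

theorem reaches_terminal_delRules_iff_of_count_eq_one (hd : d ∉ S) {X T : Multiset Λ}
    (hX : X.count d = 1) :
    Reaches (delRules S d) X T ∧ Terminal (delRules S d) T ↔ T = X.filter (· ∉ S) := by
  rw [terminal_delRules_iff hd]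
  constructor
  · rintro ⟨hreach, -, hT⟩
    have hfilter := filter_eq_of_reaches_delRules hd hX.le hreach
    have hTd : T.count d = 1 := by rw [← count_filter_not_mem_eq hd, hfilter,
      count_filter_not_mem_eq hd, hX]
    rw [← hfilter, eq_comm, Multiset.filter_eq_self]
    exact fun x hxT hxS => hT (Multiset.count_pos.1 (by omega)) x hxS hxT
  · rintro rfl
    refine ⟨reaches_delRules_filter hd (Multiset.count_pos.1 (by omega)), ?_, ?_⟩
    · rw [count_filter_not_mem_eq hd, hX]
    · exact fun _ s hs hsX => (Multiset.mem_filter.1 hsX).2 hs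

theorem reaches_terminal_delRules_iff_of_forall_not_mem (hd : d ∉ S) {F T : Multiset Λ}
    (hdF : d ∉ F) (hF : ∀ x ∈ F, x ∉ S) :
    Reaches (delRules S d) (F + {d} + {d}) T ∧ Terminal (delRules S d) T ↔ T = F := by
  have hstart : F + {d} + {d} = {d, d} + F := by
    simp [add_comm, Multiset.add_cons, Multiset.singleton_add]
  have hFterm : Terminal (delRules S d) F := (terminal_delRules_iff hd).2
    ⟨by simp [Multiset.count_eq_zero.2 hdF], fun h => absurd h hdF⟩
  rw [hstart]
  constructor
  · rintro ⟨hreach, hT⟩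
    rcases Relation.ReflTransGen.cases_head hreach with rfl | ⟨Y, hstep, hreach⟩
    · simp [terminal_delRules_iff hd] at hT
    rcases rStep_delRules_iff.1 hstep with hY | ⟨s, hs, Z, hZ, -⟩
    · rw [add_right_inj] at hY
      rw [← hY] at hreach
      exact Reaches.eq_of_terminal hFterm hreach
    · have hsF : s ∈ F := by
        have : s ∈ ({d, d} + F : Multiset Λ) := hZ ▸ by simp
        simpa [show s ≠ d from fun h => hd (h ▸ hs)] using this
      exact absurd hs (hF s hsF)
  · rintro rfl
    exact ⟨Relation.ReflTransGen.single (rStep_delRules_iff.2 (Or.inl rfl)), hFterm⟩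

end DeletionGadget

/-- The deletion gadget: for `d ∉ S` and any configuration `C` containing
no `d`, the 2-step step CRN with rules `d + s → d` (`s ∈ S`) and `d + d → ∅`, starting step 1
from `C` plus one copy of `d` and adding one further copy of `d` at step 2, has as unique
terminal configuration after step 2 exactly `C` with all copies of the species of `S` removed
and zero copies of `d`. -/
theorem stmt13 {Λ : Type} [DecidableEq Λ] (S : Finset Λ) (d : Λ) (hd : d ∉ S)
    (C : Multiset Λ) (hC : C.count d = 0) :
    ∀ T : Multiset Λ,
      T ∈ termAfter (delRules S d) [C + {d}, {d}] ↔ T = C.filter fun s => s ∉ S := by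
  intro T
  have hfilter : (C + {d}).filter (· ∉ S) = C.filter (· ∉ S) + {d} := by
    simp [Multiset.filter_add, hd]
  have hstep₁ : stepTerm (delRules S d) {0} (C + {d}) = {C.filter (· ∉ S) + {d}} := by
    ext X
    rw [mem_stepTerm_singleton, zero_add, reaches_terminal_delRules_iff_of_count_eq_one hd
      (by simp [hC]), hfilter, Set.mem_singleton_iff]
  change T ∈ stepTerm _ (stepTerm _ {0} (C + {d})) {d} ↔ _
  rw [hstep₁, mem_stepTerm_singleton]
  exact reaches_terminal_delRules_iff_of_forall_not_mem hd
    (fun h => by have := Multiset.count_pos.2 (Multiset.mem_of_mem_filter h); omega)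
    fun x hx => (Multiset.mem_filter.1 hx).2
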